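/- arXiv:2209.00406 — 4 statements merged into one kernel-verified Lean document; each statement's English description precedes it below -/
import Mathlib

section
/- Let σ̂ : ℝ → ℝ₊ be a positive function with lim_{k→-∞} d2(k, σ̂(k)) = +∞, where d2(k,σ) = -k/(σ√T) - σ√T/2 for fixed T > 0. Then there exists K > 0 such that σ̂(k)√T < √(-2k) for all k < -K (the left wing Lee condition). -/
open Real Filter Set

/-- Standard Gaussian CDF. -/
noncomputable def stdN (x : ℝ) : ℝ :=
  (Real.sqrt (2 * Real.pi))⁻¹ * ∫ t in Set.Iic x, Real.exp (-t ^ 2 / 2)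

/-- Standard Gaussian density. -/
noncomputable def stdn (x : ℝ) : ℝ :=
  (Real.sqrt (2 * Real.pi))⁻¹ * Real.exp (-x ^ 2 / 2)

/-- Inverse of the standard Gaussian CDF. -/
noncomputable def Ninv : ℝ → ℝ := Function.invFun stdN

/-- Black-Scholes d1. -/
noncomputable def d1 (T k σ : ℝ) : ℝ := -k / (σ * Real.sqrt T) + σ * Real.sqrt T / 2

/-- Black-Scholes d2. -/
noncomputable def d2 (T k σ : ℝ) : ℝ := -k / (σ * Real.sqrt T) - σ * Real.sqrt T / 2

theorem left_wing_Lee (T : ℝ) (hT : 0 < T) (σhat : ℝ → ℝ) (hpos : ∀ k, 0 < σhat k)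
    (hlim : Filter.Tendsto (fun k => d2 T k (σhat k)) Filter.atBot Filter.atTop) :
    ∃ K > (0 : ℝ), ∀ k < -K, σhat k * Real.sqrt T < Real.sqrt (-2 * k) := by
  have h := hlim.eventually_gt_atTop 0
  rw [eventually_atBot] at h
  obtain ⟨a, ha⟩ := h
  refine ⟨max 1 (-a), lt_max_iff.mpr (Or.inl one_pos), fun k hk => ?_⟩
  have hka : k ≤ a := by
    have := le_max_right 1 (-a); linarith
  have hd2 := ha k hka
  set s := σhat k * Real.sqrt T with hs
  have hspos : 0 < s := mul_pos (hpos k) (Real.sqrt_pos.mpr hT)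
  by_contra hcon
  push_neg at hcon
  have hkneg : k < 0 := by have := le_max_left 1 (-a); linarith
  have h2k : 0 < -2 * k := by linarith
  have hsq : -2 * k ≤ s ^ 2 := by
    have h1 := Real.sq_sqrt h2k.le
    nlinarith [Real.sqrt_nonneg (-2 * k)]
  have hle : d2 T k (σhat k) ≤ 0 := by
    unfold d2
    rw [← hs]
    have : -k / s ≤ s / 2 := by
      rw [div_le_div_iff₀ hspos two_pos]
      nlinarith
    linarith
  linarith
end

section
/- Let σ̂ : ℝ → ℝ₊ be a smile in strike with σ̂(k)√T = a₀ + a₁k + o(k) as k → 0, where a₀ > 0, and suppose the map k ↦ δ(k) = N(d1(k,σ̂(k))) is a differentiable bijection near 0. Then the delta smile σ(δ) = σ̂(k(δ)) satisfies σ(δ)√T = a₀ - (2a₀a₁/(n(a₀/2)(2-a₀a₁)))(δ - δ(0)) + o(δ - δ(0)), where δ(0) = N(a₀/2) and n is the standard Gaussian density, provided a₀a₁ ≠ 2. -/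
/-!
The expansion of σ̂ says exactly that `k ↦ σ̂(k)√T` takes the value `a₀` and has derivative `a₁`
at `0`. By the chain rule `δ'(0) = n(a₀/2)(a₀a₁ - 2)/(2a₀)`, which is nonzero because
`a₀a₁ ≠ 2`; so the local inverse `k(δ)` is differentiable at `δ(0)` with derivative `1/δ'(0)`,
and a second chain rule shows that `σ(δ)√T = σ̂(k(δ))√T` has derivative
`a₁/δ'(0) = -2a₀a₁/(n(a₀/2)(2 - a₀a₁))` there, which is the claimed expansion.
-/

open Real Filter Set

open Asymptotics Topology MeasureTheory

lemma integrable_exp_neg_sq_div_two : Integrable (fun t : ℝ => exp (-t ^ 2 / 2)) :=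
  (integrable_exp_neg_mul_sq (b := 1 / 2) (by norm_num)).congr
    (Eventually.of_forall fun t => by ring_nf)

lemma hasDerivAt_stdN (x : ℝ) : HasDerivAt stdN (stdn x) x := by
  have hcont : Continuous (fun t : ℝ => exp (-t ^ 2 / 2)) := by fun_prop
  have hsplit : stdN = fun y => (√(2 * π))⁻¹ *
      ((∫ t in Set.Iic 0, exp (-t ^ 2 / 2)) + ∫ t in (0 : ℝ)..y, exp (-t ^ 2 / 2)) := by
    funext y
    rw [stdN, ← intervalIntegral.integral_Iic_sub_Iic
      integrable_exp_neg_sq_div_two.integrableOn integrable_exp_neg_sq_div_two.integrableOn]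
    ring
  have hFTC : HasDerivAt (fun y => ∫ t in (0 : ℝ)..y, exp (-t ^ 2 / 2)) (exp (-x ^ 2 / 2)) x :=
    intervalIntegral.integral_hasDerivAt_right integrable_exp_neg_sq_div_two.intervalIntegrable
      hcont.aestronglyMeasurable.stronglyMeasurableAtFilter hcont.continuousAt
  rw [hsplit]
  exact (hFTC.const_add _).const_mul _

lemma stdn_pos (x : ℝ) : 0 < stdn x := by
  unfold stdn
  positivity

lemma eq_and_hasDerivAt_zero_of_isLittleO {f : ℝ → ℝ} {a₀ a₁ : ℝ}
    (h : (fun k => f k - (a₀ + a₁ * k)) =o[𝓝 0] fun k => k) :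
    f 0 = a₀ ∧ HasDerivAt f a₁ 0 := by
  have hf0 : f 0 = a₀ := by
    simpa [sub_eq_zero] using (h.def one_pos).self_of_nhds
  refine ⟨hf0, hasDerivAt_iff_isLittleO.2 ?_⟩
  simpa [hf0, smul_eq_mul, mul_comm, sub_sub] using h

lemma hasDerivAt_d1_comp {T x w' : ℝ} {σ : ℝ → ℝ}
    (hσ : HasDerivAt (fun k => σ k * √T) w' x) (hx : σ x * √T ≠ 0) :
    HasDerivAt (fun k => d1 T k (σ k))
      ((x * w' - σ x * √T) / (σ x * √T) ^ 2 + w' / 2) x :=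
  (((hasDerivAt_neg x).div hσ hx).add (hσ.div_const 2)).congr_deriv (by ring)

lemma mul_inv_atm_delta_deriv {a₀ a₁ n : ℝ} (ha₀ : a₀ ≠ 0) (hn : n ≠ 0) (hne : a₀ * a₁ ≠ 2) :
    a₁ * (n * ((a₀ * a₁ - 2) / (2 * a₀)))⁻¹ = -(2 * a₀ * a₁ / (n * (2 - a₀ * a₁))) := by
  have h₁ : a₀ * a₁ - 2 ≠ 0 := sub_ne_zero.2 hne
  rw [show 2 - a₀ * a₁ = -(a₀ * a₁ - 2) by ring]
  field_simp

theorem atm_first_order_expansion_general (T : ℝ)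
    (σhat : ℝ → ℝ)
    (a₀ a₁ : ℝ) (ha₀ : 0 < a₀) (hne : a₀ * a₁ ≠ 2)
    -- σ̂(k)√T = a₀ + a₁ k + o(k) as k → 0
    (hexp : (fun k => σhat k * Real.sqrt T - (a₀ + a₁ * k)) =o[nhds 0] (fun k => k))
    (δf kf : ℝ → ℝ)
    (hδf : ∀ k, δf k = stdN (d1 T k (σhat k)))
    (hinv₁ : ∀ᶠ k in nhds 0, kf (δf k) = k)
    (hinv₂ : ∀ᶠ δ in nhds (stdN (a₀ / 2)), δf (kf δ) = δ)
    (hkfcont : ContinuousAt kf (stdN (a₀ / 2))) :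
    (fun δ => σhat (kf δ) * Real.sqrt T -
        (a₀ - (2 * a₀ * a₁ / (stdn (a₀ / 2) * (2 - a₀ * a₁))) * (δ - stdN (a₀ / 2))))
      =o[nhds (stdN (a₀ / 2))] (fun δ => δ - stdN (a₀ / 2)) := by
  obtain ⟨hs0, hs⟩ := eq_and_hasDerivAt_zero_of_isLittleO hexp
  have hd1_0 : d1 T 0 (σhat 0) = a₀ / 2 := by
    rw [d1, hs0]
    ring
  have hδ : HasDerivAt δf (stdn (a₀ / 2) * ((a₀ * a₁ - 2) / (2 * a₀))) 0 := by
    have h := (hasDerivAt_stdN _).comp 0 (hasDerivAt_d1_comp hs (hs0 ▸ ha₀.ne'))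
    rw [hd1_0, hs0] at h
    rw [show δf = _ from funext hδf]
    refine h.congr_deriv (congrArg _ ?_)
    field_simp
    ring
  have hkf0 : kf (stdN (a₀ / 2)) = 0 := by
    simpa [hδf 0, hd1_0] using hinv₁.self_of_nhds
  have hc : stdn (a₀ / 2) * ((a₀ * a₁ - 2) / (2 * a₀)) ≠ 0 :=
    mul_ne_zero (stdn_pos _).ne' (div_ne_zero (sub_ne_zero.2 hne) (by positivity))
  have hkf := HasDerivAt.of_local_left_inverse hkfcont (hkf0 ▸ hδ) hc hinv₂
  have hσk := hasDerivAt_iff_isLittleO.1 ((hkf0 ▸ hs).comp _ hkf)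
  rw [mul_inv_atm_delta_deriv ha₀.ne' (stdn_pos _).ne' hne] at hσk
  refine hσk.congr_left fun δ => ?_
  simp only [Function.comp_apply, hkf0, hs0, smul_eq_mul]
  ring

theorem atm_first_order_expansion (T : ℝ) (hT : 0 < T)
    (σhat : ℝ → ℝ) (hpos : ∀ k, 0 < σhat k)
    (a₀ a₁ : ℝ) (ha₀ : 0 < a₀) (hne : a₀ * a₁ ≠ 2)
    -- σ̂(k)√T = a₀ + a₁ k + o(k) as k → 0
    (hexp : (fun k => σhat k * Real.sqrt T - (a₀ + a₁ * k)) =o[nhds 0] (fun k => k))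
    (δf kf : ℝ → ℝ)
    (hδf : ∀ k, δf k = stdN (d1 T k (σhat k)))
    (hdiff : DifferentiableAt ℝ δf 0)
    (hinv₁ : ∀ᶠ k in nhds 0, kf (δf k) = k)
    (hinv₂ : ∀ᶠ δ in nhds (stdN (a₀ / 2)), δf (kf δ) = δ)
    (hkfcont : ContinuousAt kf (stdN (a₀ / 2))) :
    (fun δ => σhat (kf δ) * Real.sqrt T -
        (a₀ - (2 * a₀ * a₁ / (stdn (a₀ / 2) * (2 - a₀ * a₁))) * (δ - stdN (a₀ / 2))))
      =o[nhds (stdN (a₀ / 2))] (fun δ => δ - stdN (a₀ / 2)) :=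
  atm_first_order_expansion_general T σhat a₀ a₁ ha₀ hne hexp δf kf hδf hinv₁ hinv₂ hkfcont
end

section
/- Consider the SSVI total variance ω(k) = (θ/2)(1 + ρφk + √((φk+ρ)² + 1 - ρ²)) with θ > 0, φ > 0, ρ ∈ (-1,1), and suppose (θφ/2)(1+|ρ|) < 2. Then the equation ω(k) = -2k has the unique solution k̃ = -2θ/R, where R = (2 + (θφ/2)(1+ρ))(2 - (θφ/2)(1-ρ)) > 0. -/
open Real

theorem ssvi_switching_point (θ φ ρ : ℝ) (hθ : 0 < θ) (hφ : 0 < φ)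
    (hρ : ρ ∈ Set.Ioo (-1 : ℝ) 1) (hLee : θ * φ / 2 * (1 + |ρ|) < 2)
    (ω : ℝ → ℝ)
    (hω : ∀ k, ω k = θ / 2 * (1 + ρ * φ * k + Real.sqrt ((φ * k + ρ) ^ 2 + 1 - ρ ^ 2)))
    (R : ℝ) (hR : R = (2 + θ * φ / 2 * (1 + ρ)) * (2 - θ * φ / 2 * (1 - ρ))) :
    0 < R ∧ ∀ k : ℝ, ω k = -2 * k ↔ k = -2 * θ / R := by
  obtain ⟨hρ1, hρ2⟩ := hρ
  have hθ0 : θ ≠ 0 := ne_of_gt hθ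
  have h1ρ2 : 0 < 1 - ρ ^ 2 := by nlinarith
  have hfac2 : 0 < 2 - θ * φ / 2 * (1 - ρ) := by
    have h1 : 1 - ρ ≤ 1 + |ρ| := by cases abs_cases ρ <;> nlinarith [abs_nonneg ρ]
    nlinarith [mul_pos hθ hφ]
  have hfac1 : 0 < 2 + θ * φ / 2 * (1 + ρ) := by nlinarith [mul_pos hθ hφ]
  have hRpos : 0 < R := by rw [hR]; exact mul_pos hfac1 hfac2
  have hRne : R ≠ 0 := ne_of_gt hRpos
  have hRval : R = 4 + 2 * θ * φ * ρ - θ ^ 2 * φ ^ 2 * (1 - ρ ^ 2) / 4 := by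
    rw [hR]; ring
  refine ⟨hRpos, fun k => ⟨fun h => ?_, fun h => ?_⟩⟩
  · rw [hω k] at h
    set S := Real.sqrt ((φ * k + ρ) ^ 2 + 1 - ρ ^ 2) with hSdef
    have hS0 : 0 ≤ S := Real.sqrt_nonneg _
    have hin : 0 ≤ (φ * k + ρ) ^ 2 + 1 - ρ ^ 2 := by nlinarith [sq_nonneg (φ * k + ρ)]
    have hS2 : S ^ 2 = (φ * k + ρ) ^ 2 + 1 - ρ ^ 2 := Real.sq_sqrt hin
    have hlin : θ * S = -4 * k - θ - θ * (ρ * φ) * k := by linear_combination 2 * h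
    have hsq : (-4 * k - θ - θ * (ρ * φ) * k) ^ 2 = θ ^ 2 * ((φ * k + ρ) ^ 2 + 1 - ρ ^ 2) := by
      rw [← hlin, mul_pow, hS2]
    have key : k * (R * k + 2 * θ) = 0 := by
      linear_combination (1/4 : ℝ) * hsq + k ^ 2 * hR
    rcases mul_eq_zero.mp key with hk0 | hk1
    · exfalso
      rw [hk0] at hlin
      nlinarith [mul_nonneg hθ.le hS0]
    · field_simp
      linarith [hk1]
  · subst h
    rw [hω]
    set u := (8 + 2 * θ * (ρ * φ) - R) / R with hudef
    have h8 : 0 < 8 + 2 * θ * (ρ * φ) - R := by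
      nlinarith [mul_nonneg (sq_nonneg (θ * φ)) h1ρ2.le]
    have hu0 : 0 ≤ u := div_nonneg h8.le hRpos.le
    have hid : (φ * (-2 * θ / R) + ρ) ^ 2 + 1 - ρ ^ 2 = u ^ 2 := by
      rw [hudef]
      field_simp
      linear_combination (16 : ℝ) * hRval
    rw [hid, Real.sqrt_sq hu0, hudef]
    field_simp
    ring
end

section
/- Consider the SVI total variance ω(k) = a + b(ρ(k-m) + √((k-m)² + s²)) with b > 0, s > 0, ρ ∈ (-1,1), ω > 0 everywhere, and b(1-ρ) < 2, b(1+ρ) < 2. Then the equation ω(k) = -2k has exactly one real solution, given by k̃ = (bm(2ρ - b(1-ρ²)) - a(2+bρ) - b√((a+2m)² + s²(2+b(1+ρ))(2-b(1-ρ))))/((2+b(1+ρ))(2-b(1-ρ))). -/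
open Real

theorem svi_switching_point (a b ρ m s : ℝ) (hb : 0 < b) (hs : 0 < s)
    (hρ : ρ ∈ Set.Ioo (-1 : ℝ) 1)
    (ω : ℝ → ℝ)
    (hω : ∀ k, ω k = a + b * (ρ * (k - m) + Real.sqrt ((k - m) ^ 2 + s ^ 2)))
    (hωpos : ∀ k, 0 < ω k)
    (hLee₁ : b * (1 - ρ) < 2) (hLee₂ : b * (1 + ρ) < 2) :
    ∀ k : ℝ, ω k = -2 * k ↔
      k = (b * m * (2 * ρ - b * (1 - ρ ^ 2)) - a * (2 + b * ρ) -
            b * Real.sqrt ((a + 2 * m) ^ 2 +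
              s ^ 2 * (2 + b * (1 + ρ)) * (2 - b * (1 - ρ)))) /
          ((2 + b * (1 + ρ)) * (2 - b * (1 - ρ))) := by
  obtain ⟨hρ1, hρ2⟩ := hρ
  have hD1 : 0 < 2 + b * (1 + ρ) := by nlinarith
  have hD2 : 0 < 2 - b * (1 - ρ) := by linarith
  have hD : 0 < (2 + b * (1 + ρ)) * (2 - b * (1 - ρ)) := mul_pos hD1 hD2
  set R := Real.sqrt ((a + 2 * m) ^ 2 +
      s ^ 2 * (2 + b * (1 + ρ)) * (2 - b * (1 - ρ))) with hRdef
  have hargnn : 0 ≤ (a + 2 * m) ^ 2 + s ^ 2 * (2 + b * (1 + ρ)) * (2 - b * (1 - ρ)) := by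
    nlinarith [sq_nonneg (a + 2 * m), sq_nonneg s]
  have hRsq : R ^ 2 = (a + 2 * m) ^ 2 +
      s ^ 2 * (2 + b * (1 + ρ)) * (2 - b * (1 - ρ)) := Real.sq_sqrt hargnn
  have hRge : |a + 2 * m| ≤ R := by
    have h1 : (a + 2 * m) ^ 2 ≤ (a + 2 * m) ^ 2 +
        s ^ 2 * (2 + b * (1 + ρ)) * (2 - b * (1 - ρ)) := by nlinarith [sq_nonneg s]
    have := Real.sqrt_le_sqrt h1
    rwa [Real.sqrt_sq_eq_abs] at this
  have hAR : a + 2 * m ≤ R := le_trans (le_abs_self _) hRge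
  have hAR' : -R ≤ a + 2 * m := neg_le_of_abs_le hRge
  have hRpos : 0 < R := Real.sqrt_pos.mpr (by nlinarith [sq_nonneg (a + 2 * m), mul_pos (mul_pos (pow_pos hs 2) hD1) hD2])
  intro k
  constructor
  · intro hk
    rw [hω] at hk
    set S := Real.sqrt ((k - m) ^ 2 + s ^ 2) with hSdef
    have hSsq : S ^ 2 = (k - m) ^ 2 + s ^ 2 := Real.sq_sqrt (by positivity)
    have hSpos : 0 < S := Real.sqrt_pos.mpr (by positivity)
    have heq : b * S = -((2 + b * ρ) * (k - m) + (a + 2 * m)) := by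
      linear_combination hk
    have hsq' : b ^ 2 * ((k - m) ^ 2 + s ^ 2) =
        ((2 + b * ρ) * (k - m) + (a + 2 * m)) ^ 2 := by
      have hsq : (b * S) ^ 2 = ((2 + b * ρ) * (k - m) + (a + 2 * m)) ^ 2 := by
        rw [heq]; ring
      linear_combination hsq - b ^ 2 * hSsq
    have hfac : ((2 + b * (1 + ρ)) * (2 - b * (1 - ρ)) * (k - m) +
          (2 + b * ρ) * (a + 2 * m) - b * R) *
        ((2 + b * (1 + ρ)) * (2 - b * (1 - ρ)) * (k - m) +
          (2 + b * ρ) * (a + 2 * m) + b * R) = 0 := by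
      linear_combination (-((2 + b * (1 + ρ)) * (2 - b * (1 - ρ)))) * hsq' - b ^ 2 * hRsq
    rcases mul_eq_zero.mp hfac with hX | hX
    · -- the spurious root: contradiction
      exfalso
      have h1 : (2 + b * (1 + ρ)) * (2 - b * (1 - ρ)) * (b * S) =
          b ^ 2 * (a + 2 * m) - (2 + b * ρ) * (b * R) := by
        linear_combination ((2 + b * (1 + ρ)) * (2 - b * (1 - ρ))) * heq - (2 + b * ρ) * hX
      nlinarith [mul_pos (mul_pos hD hb) hSpos, mul_pos hRpos hb,
        mul_le_mul_of_nonneg_left hAR (by positivity : (0:ℝ) ≤ b ^ 2),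
        mul_pos (mul_pos hD2 hb) hRpos]
    · rw [eq_div_iff hD.ne']
      linear_combination hX
  · intro hk
    have hkD : k * ((2 + b * (1 + ρ)) * (2 - b * (1 - ρ))) =
        b * m * (2 * ρ - b * (1 - ρ ^ 2)) - a * (2 + b * ρ) - b * R := by
      rw [hk]; field_simp
    have hu : (2 + b * (1 + ρ)) * (2 - b * (1 - ρ)) * (k - m) +
        (2 + b * ρ) * (a + 2 * m) + b * R = 0 := by
      linear_combination hkD
    have hT : 0 < b * (a + 2 * m) + (2 + b * ρ) * R := by
      nlinarith [mul_le_mul_of_nonneg_left hAR' hb.le, mul_pos (mul_pos hD2 hb) hRpos]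
    have hval : ((k - m) ^ 2 + s ^ 2) * ((2 + b * (1 + ρ)) * (2 - b * (1 - ρ))) ^ 2 =
        (b * (a + 2 * m) + (2 + b * ρ) * R) ^ 2 := by
      linear_combination ((2 + b * (1 + ρ)) * (2 - b * (1 - ρ)) * (k - m) -
        (2 + b * ρ) * (a + 2 * m) - b * R) * hu -
        ((2 + b * (1 + ρ)) * (2 - b * (1 - ρ))) * hRsq
    have hS : Real.sqrt ((k - m) ^ 2 + s ^ 2) =
        (b * (a + 2 * m) + (2 + b * ρ) * R) / ((2 + b * (1 + ρ)) * (2 - b * (1 - ρ))) := by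
      have h1 : (k - m) ^ 2 + s ^ 2 =
          ((b * (a + 2 * m) + (2 + b * ρ) * R) /
            ((2 + b * (1 + ρ)) * (2 - b * (1 - ρ)))) ^ 2 := by
        rw [div_pow, eq_div_iff (by positivity : ((2 + b * (1 + ρ)) * (2 - b * (1 - ρ))) ^ 2 ≠ 0)]
        exact hval
      rw [h1, Real.sqrt_sq (div_pos hT hD).le]
    have hgoal : b * ((b * (a + 2 * m) + (2 + b * ρ) * R) /
        ((2 + b * (1 + ρ)) * (2 - b * (1 - ρ)))) =
        -((2 + b * ρ) * (k - m) + (a + 2 * m)) := by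
      rw [mul_div_assoc', div_eq_iff hD.ne']
      linear_combination (2 + b * ρ) * hu
    rw [hω, hS]
    linear_combination hgoal
end
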